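/- arXiv:2312.01384 — 11 statements merged into one kernel-verified Lean document; each statement's English description precedes it below -/
import Mathlib

section
/- For any 4-node directed cycle C = (u, v, s, t, u) in a graph with a proper 3-coloring, the sum b(C) = a(u,v) + a(v,s) + a(s,t) + a(t,u) equals 0. -/
def aval {V : Type} (c : V → ℤ) (u v : V) : ℤ :=
  if c u ≠ 3 ∧ c v ≠ 3 then c u - c v else 0

theorem stmt1 {V : Type} (G : SimpleGraph V) (c : V → ℤ)
    (hc : ∀ w, c w = 1 ∨ c w = 2 ∨ c w = 3)
    (hproper : ∀ x y, G.Adj x y → c x ≠ c y)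
    (u v s t : V)
    (hdist : u ≠ v ∧ u ≠ s ∧ u ≠ t ∧ v ≠ s ∧ v ≠ t ∧ s ≠ t)
    (h1 : G.Adj u v) (h2 : G.Adj v s) (h3 : G.Adj s t) (h4 : G.Adj t u) :
    aval c u v + aval c v s + aval c s t + aval c t u = 0 := by
  have a1 := hproper _ _ h1
  have a2 := hproper _ _ h2
  have a3 := hproper _ _ h3
  have a4 := hproper _ _ h4
  unfold aval
  rcases hc u with hu | hu | hu <;> rcases hc v with hv | hv | hv <;>
    rcases hc s with hs | hs | hs <;> rcases hc t with ht | ht | ht <;>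
    simp_all <;> omega
end

section
/- Let c : V → {1,2,3} be a proper 3-coloring and let P = (v_0, v_1, ..., v_ℓ) be a directed path (a walk along edges) of length ℓ with endpoints u = v_0 and v = v_ℓ. Then b(P) = Σ_{j=0}^{ℓ-1} a(v_j, v_{j+1}) satisfies b(P) ≡ i(u) + i(v) + ℓ (mod 2), where i(w) = 1 if c(w) = 3 and i(w) = 0 otherwise. -/
/-- Indicator that a vertex is colored 3. -/
def ind {V : Type} (c : V → ℤ) (w : V) : ℤ := if c w = 3 then 1 else 0

lemma edge_aval {V : Type} (c : V → ℤ) (hc : ∀ w, c w = 1 ∨ c w = 2 ∨ c w = 3)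
    {x y : V} (hne : c x ≠ c y) :
    aval c x y ≡ ind c x + ind c y + 1 [ZMOD 2] := by
  unfold aval ind Int.ModEq
  rcases hc x with hx | hx | hx <;> rcases hc y with hy | hy | hy <;>
    first
      | exact absurd (hx.trans hy.symm) hne
      | (simp [hx, hy])

theorem stmt2 {V : Type} (G : SimpleGraph V) (c : V → ℤ)
    (hc : ∀ w, c w = 1 ∨ c w = 2 ∨ c w = 3)
    (hproper : ∀ x y, G.Adj x y → c x ≠ c y)
    (ℓ : ℕ) (v : Fin (ℓ + 1) → V)
    (hwalk : ∀ j : Fin ℓ, G.Adj (v j.castSucc) (v j.succ)) :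
    (∑ j : Fin ℓ, aval c (v j.castSucc) (v j.succ)) ≡
      ind c (v 0) + ind c (v (Fin.last ℓ)) + (ℓ : ℤ) [ZMOD 2] := by
  induction ℓ with
  | zero =>
    simp only [Finset.univ_eq_empty, Finset.sum_empty, Fin.last_zero, Nat.cast_zero, add_zero]
    unfold ind Int.ModEq
    split <;> decide
  | succ n ih =>
    have hS := ih (fun j => v j.castSucc)
      (fun j => by
        have := hwalk j.castSucc
        rw [Fin.succ_castSucc] at this
        exact this)
    rw [Fin.sum_univ_castSucc]
    have he : aval c (v (Fin.last n).castSucc) (v (Fin.last n).succ) ≡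
        ind c (v (Fin.last n).castSucc) + ind c (v (Fin.last n).succ) + 1 [ZMOD 2] :=
      edge_aval c hc (hproper _ _ (hwalk (Fin.last n)))
    have hsum := hS.add he
    have h0 : v (Fin.castSucc (0 : Fin (n+1))) = v 0 := rfl
    have hlast : (Fin.last n).succ = Fin.last (n + 1) := rfl
    rw [h0, hlast] at hsum
    refine hsum.trans ?_
    unfold ind Int.ModEq
    push_cast
    split <;> split <;> split <;> omega
end

section
/- Let c be a proper 3-coloring of a graph and let C be a closed walk of length ℓ (a walk starting and ending at the same vertex, with consecutive vertices adjacent). Then b(C) ≡ ℓ (mod 2), where b(C) is the sum of a-values along the directed edges of C. -/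
theorem stmt3 {V : Type} (G : SimpleGraph V) (c : V → ℤ)
    (hc : ∀ w, c w = 1 ∨ c w = 2 ∨ c w = 3)
    (hproper : ∀ x y, G.Adj x y → c x ≠ c y)
    (ℓ : ℕ) (v : Fin (ℓ + 1) → V)
    (hclosed : v 0 = v (Fin.last ℓ))
    (hwalk : ∀ j : Fin ℓ, G.Adj (v j.castSucc) (v j.succ)) :
    (∑ j : Fin ℓ, aval c (v j.castSucc) (v j.succ)) ≡ (ℓ : ℤ) [ZMOD 2] := by
  set f : V → ZMod 2 := fun w => if c w = 3 then 1 else 0 with hf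
  refine (ZMod.intCast_eq_intCast_iff _ _ 2).mp ?_
  push_cast
  have key : ∀ j : Fin ℓ, ((aval c (v j.castSucc) (v j.succ) : ℤ) : ZMod 2)
      = 1 + f (v j.castSucc) + f (v j.succ) := by
    intro j
    have hne := hproper _ _ (hwalk j)
    rcases hc (v j.castSucc) with h1 | h1 | h1 <;>
      rcases hc (v j.succ) with h2 | h2 | h2 <;>
      simp [aval, hf, h1, h2] at hne ⊢ <;> decide
  rw [Finset.sum_congr rfl (fun j _ => key j)]
  rw [Finset.sum_add_distrib, Finset.sum_add_distrib]
  have h1 : ∑ j : Fin ℓ, f (v j.castSucc)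
      = (∑ i : Fin (ℓ + 1), f (v i)) - f (v (Fin.last ℓ)) := by
    rw [Fin.sum_univ_castSucc]; ring
  have h2 : ∑ j : Fin ℓ, f (v j.succ)
      = (∑ i : Fin (ℓ + 1), f (v i)) - f (v 0) := by
    rw [Fin.sum_univ_succ (f := fun i => f (v i))]; ring
  rw [h1, h2, hclosed]
  have : ∀ x : ZMod 2, x + x = 0 := by decide
  simp only [Finset.sum_const, Finset.card_univ, Fintype.card_fin, nsmul_eq_mul, mul_one]
  ring_nf
  -- goal should now follow from char 2
  have hch : ((∑ i : Fin (ℓ + 1), f (v i)) - f (v (Fin.last ℓ)))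
      + ((∑ i : Fin (ℓ + 1), f (v i)) - f (v (Fin.last ℓ))) = 0 := this _
  linear_combination hch
end

section
/- Let c be a proper coloring of the gadget A(k). If a color is confined to two rows (i.e., appears at least twice within each of two distinct rows), then a contradiction follows; formally, each color can be confined to at most one row. -/
/-- A color `x` is confined to row `i` of the gadget if it appears
at least twice within that row. -/
def ConfinedRow {k : ℕ} {α : Type} (c : Fin k × Fin k → α) (x : α) (i : Fin k) : Prop :=
  ∃ j j' : Fin k, j ≠ j' ∧ c (i, j) = x ∧ c (i, j') = x

theorem stmt8 {k : ℕ} {α : Type} (c : Fin k × Fin k → α)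
    (hproper : ∀ p q : Fin k × Fin k, p.1 ≠ q.1 → p.2 ≠ q.2 → c p ≠ c q)
    (x : α) (i₁ i₂ : Fin k)
    (h₁ : ConfinedRow c x i₁) (h₂ : ConfinedRow c x i₂) :
    i₁ = i₂ := by
  by_contra hne
  obtain ⟨j, j', hjj, hc1, hc2⟩ := h₁
  obtain ⟨m, m', hmm, hd1, hd2⟩ := h₂
  rcases eq_or_ne j m with rfl | hjm
  · exact hproper (i₁, j') (i₂, j) hne hjj.symm (hc2.trans hd1.symm)
  · exact hproper (i₁, j) (i₂, m) hne hjm (hc1.trans hd1.symm)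
end

section
/- Let c be a proper coloring of the gadget A(k). No color can be confined to both a row and a column: there is no color x, row i, and column j such that x appears at least twice in row i and at least twice in column j. -/
def ConfinedCol {k : ℕ} {α : Type} (c : Fin k × Fin k → α) (x : α) (j : Fin k) : Prop :=
  ∃ i i' : Fin k, i ≠ i' ∧ c (i, j) = x ∧ c (i', j) = x

theorem stmt9 {k : ℕ} {α : Type} (c : Fin k × Fin k → α)
    (hproper : ∀ p q : Fin k × Fin k, p.1 ≠ q.1 → p.2 ≠ q.2 → c p ≠ c q) :
    ¬ ∃ (x : α) (i j : Fin k), ConfinedRow c x i ∧ ConfinedCol c x j := by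
  rintro ⟨x, i, j, ⟨j₁, j₂, hj, h1, h2⟩, ⟨i₁, i₂, hi, h3, h4⟩⟩
  obtain ⟨j', hj', hcj⟩ : ∃ j', j' ≠ j ∧ c (i, j') = x := by
    by_cases h : j₁ = j
    · exact ⟨j₂, fun e => hj (h.trans e.symm), h2⟩
    · exact ⟨j₁, h, h1⟩
  obtain ⟨i', hi', hci⟩ : ∃ i', i' ≠ i ∧ c (i', j) = x := by
    by_cases h : i₁ = i
    · exact ⟨i₂, fun e => hi (h.trans e.symm), h4⟩
    · exact ⟨i₁, h, h3⟩
  exact hproper (i, j') (i', j) (fun e => hi' e.symm) hj' (hcj.trans hci.symm)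
end

section
/- Let k ≥ 2 and let c be a proper coloring of the gadget A(k) using at most 2k - 2 colors. Then A(k) has a colorful row or a colorful column: there exists a row whose k entries receive k distinct colors, or a column whose k entries receive k distinct colors. -/
theorem stmt10 (k : ℕ) (hk : 2 ≤ k) (c : Fin k × Fin k → Fin (2 * k - 2))
    (hproper : ∀ p q : Fin k × Fin k, p.1 ≠ q.1 → p.2 ≠ q.2 → c p ≠ c q) :
    (∃ i : Fin k, Function.Injective fun j : Fin k => c (i, j)) ∨
    (∃ j : Fin k, Function.Injective fun i : Fin k => c (i, j)) := by
  by_contra hcon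
  push_neg at hcon
  obtain ⟨hrow, hcol⟩ := hcon
  have hR : ∀ i : Fin k, ∃ j1 j2 : Fin k, j1 ≠ j2 ∧ c (i, j1) = c (i, j2) := by
    intro i
    have h := hrow i
    rw [Function.Injective] at h
    push_neg at h
    obtain ⟨j1, j2, h1, h2⟩ := h
    exact ⟨j1, j2, h2, h1⟩
  have hC : ∀ j : Fin k, ∃ i1 i2 : Fin k, i1 ≠ i2 ∧ c (i1, j) = c (i2, j) := by
    intro j
    have h := hcol j
    rw [Function.Injective] at h
    push_neg at h
    obtain ⟨i1, i2, h1, h2⟩ := h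
    exact ⟨i1, i2, h2, h1⟩
  choose r1 r2 hrne hreq using hR
  choose c1 c2 hcne hceq using hC
  -- key: a color repeated in row i cannot appear outside row i
  have key : ∀ (i a b : Fin k), a ≠ b → c (i, a) = c (i, b) →
      ∀ (i' a' : Fin k), i' ≠ i → c (i', a') ≠ c (i, a) := by
    intro i a b hab heq i' a' hi' hcc
    have h1 : a' = a := by
      by_contra h
      exact hproper (i', a') (i, a) hi' h hcc
    have h2 : a' = b := by
      by_contra h
      exact hproper (i', a') (i, b) hi' h (hcc.trans heq)
    exact hab (h1 ▸ h2)
  -- key': a color repeated in column j cannot appear outside column j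
  have key' : ∀ (j a b : Fin k), a ≠ b → c (a, j) = c (b, j) →
      ∀ (j' a' : Fin k), j' ≠ j → c (a', j') ≠ c (a, j) := by
    intro j a b hab heq j' a' hj' hcc
    have h1 : a' = a := by
      by_contra h
      exact hproper (a', j') (a, j) h hj' hcc
    have h2 : a' = b := by
      by_contra h
      exact hproper (a', j') (b, j) h hj' (hcc.trans heq)
    exact hab (h1 ▸ h2)
  set f : Fin k → Fin (2 * k - 2) := fun i => c (i, r1 i) with hf
  set g : Fin k → Fin (2 * k - 2) := fun j => c (c1 j, j) with hg
  have hfinj : Function.Injective f := by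
    intro i i' h
    by_contra hne
    exact key i (r1 i) (r2 i) (hrne i) (hreq i) i' (r1 i') (fun hh => hne (hh.symm ▸ rfl))
      h.symm
  have hginj : Function.Injective g := by
    intro j j' h
    by_contra hne
    exact key' j (c1 j) (c2 j) (hcne j) (hceq j) j' (c1 j') (fun hh => hne (hh.symm ▸ rfl))
      h.symm
  have hdisj : ∀ i j : Fin k, f i ≠ g j := by
    intro i j h
    by_cases h1 : c1 j = i
    · -- then c2 j ≠ i; c (c2 j, j) = g j = f i = c (i, r1 i)
      have h2 : c2 j ≠ i := fun hh => hcne j (h1.trans hh.symm)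
      have : c (c2 j, j) = c (i, r1 i) := by
        rw [← hceq j]; exact h.symm
      exact key i (r1 i) (r2 i) (hrne i) (hreq i) (c2 j) j h2 this
    · have : c (c1 j, j) = c (i, r1 i) := h.symm
      exact key i (r1 i) (r2 i) (hrne i) (hreq i) (c1 j) j h1 this
  have hFinj : Function.Injective (Sum.elim f g : Fin k ⊕ Fin k → Fin (2 * k - 2)) := by
    intro x y h
    cases x with
    | inl a =>
      cases y with
      | inl b => exact congrArg Sum.inl (hfinj h)
      | inr b => exact absurd h (hdisj a b)
    | inr a =>
      cases y with
      | inl b => exact absurd h.symm (hdisj b a)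
      | inr b => exact congrArg Sum.inr (hginj h)
  have hcard := Fintype.card_le_of_injective _ hFinj
  simp [Fintype.card_sum] at hcard
  omega
end

section
/- Let k ≥ 2 and let c be a proper coloring of the gadget A(k) using at most 2k - 2 colors. Then A(k) cannot simultaneously have a colorful row and a colorful column. -/
theorem stmt11 (k : ℕ) (hk : 2 ≤ k) (c : Fin k × Fin k → Fin (2 * k - 2))
    (hproper : ∀ p q : Fin k × Fin k, p.1 ≠ q.1 → p.2 ≠ q.2 → c p ≠ c q) :
    ¬ ((∃ i : Fin k, Function.Injective fun j : Fin k => c (i, j)) ∧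
       (∃ j : Fin k, Function.Injective fun i : Fin k => c (i, j))) := by
  classical
  rintro ⟨⟨i, hi⟩, ⟨j, hj⟩⟩
  set R : Finset (Fin (2 * k - 2)) :=
    Finset.image (fun j' => c (i, j')) Finset.univ with hR
  set C : Finset (Fin (2 * k - 2)) :=
    Finset.image (fun i' => c (i', j)) Finset.univ with hC
  have hRcard : R.card = k := by
    rw [hR, Finset.card_image_of_injective _ hi, Finset.card_univ, Fintype.card_fin]
  have hCcard : C.card = k := by
    rw [hC, Finset.card_image_of_injective _ hj, Finset.card_univ, Fintype.card_fin]
  have hunion : (R ∪ C).card ≤ 2 * k - 2 := by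
    calc (R ∪ C).card ≤ Fintype.card (Fin (2 * k - 2)) := Finset.card_le_univ _
    _ = 2 * k - 2 := Fintype.card_fin _
  have hinter : 2 ≤ (R ∩ C).card := by
    have h := Finset.card_union_add_card_inter R C
    omega
  obtain ⟨x, hx, hxne⟩ :=
    Finset.exists_mem_ne (by omega : 1 < (R ∩ C).card) (c (i, j))
  rw [Finset.mem_inter] at hx
  obtain ⟨hxR, hxC⟩ := hx
  simp only [hR, hC, Finset.mem_image, Finset.mem_univ, true_and] at hxR hxC
  obtain ⟨j₁, hj₁⟩ := hxR
  obtain ⟨i₁, hi₁⟩ := hxC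
  have hii : i ≠ i₁ := by
    rintro rfl
    exact hxne (hi₁ ▸ rfl)
  have hjj : j₁ ≠ j := by
    rintro rfl
    exact hxne (hj₁ ▸ rfl)
  exact hproper (i, j₁) (i₁, j) hii hjj (hj₁.trans hi₁.symm)
end

section
/- Let k ≥ 2 and consider the graph G* on vertex set [n'] × [k] × [k] where (ℓ,i,j) ~ (ℓ',i',j') iff |ℓ - ℓ'| ≤ 1, i ≠ i', and j ≠ j'. For any proper coloring of G* with 2k - 2 colors and any ℓ ∈ [n'-1]: if gadget A_ℓ (the vertices {ℓ} × [k] × [k]) has a colorful row, then gadget A_{ℓ+1} also has a colorful row. -/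
def GstarAdj {n' k : ℕ} (u v : Fin n' × Fin k × Fin k) : Prop :=
  |(u.1 : ℤ) - (v.1 : ℤ)| ≤ 1 ∧ u.2.1 ≠ v.2.1 ∧ u.2.2 ≠ v.2.2

theorem stmt12 (k n' : ℕ) (hk : 2 ≤ k)
    (c : Fin n' × Fin k × Fin k → Fin (2 * k - 2))
    (hproper : ∀ u v, GstarAdj u v → c u ≠ c v)
    (ℓ ℓsucc : Fin n') (hℓ : (ℓsucc : ℕ) = (ℓ : ℕ) + 1)
    (hrow : ∃ i : Fin k, Function.Injective fun j : Fin k => c (ℓ, i, j)) :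
    ∃ i : Fin k, Function.Injective fun j : Fin k => c (ℓsucc, i, j) := by
  classical
  by_contra hcon
  push_neg at hcon
  obtain ⟨i, hi⟩ := hrow
  have H : ∀ i' : Fin k, ∃ p : Fin k × Fin k, p.1 ≠ p.2 ∧
      c (ℓsucc, i', p.1) = c (ℓsucc, i', p.2) := by
    intro i'
    have h := hcon i'
    rw [Function.not_injective_iff] at h
    obtain ⟨a, b, h1, h2⟩ := h
    exact ⟨(a, b), h2, h1⟩
  choose p hp1 hp2 using H
  set d : Fin k → Fin (2 * k - 2) := fun i' => c (ℓsucc, i', (p i').1) with hd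
  have habs : |(ℓ : ℤ) - (ℓsucc : ℤ)| ≤ 1 := by
    have : (ℓsucc : ℤ) = (ℓ : ℤ) + 1 := by exact_mod_cast hℓ
    rw [this]; simp
  -- repeated colors are distinct across rows
  have hdinj : Function.Injective d := by
    intro a b hab
    by_contra hne
    -- d b = c (ℓsucc, b, (p b).1) = c (ℓsucc, b, (p b).2)
    rcases eq_or_ne (p b).1 (p a).1 with h | h
    · have hne2 : (p b).2 ≠ (p a).1 := by
        rw [← h]; exact (hp1 b).symm
      have := hproper (ℓsucc, b, (p b).2) (ℓsucc, a, (p a).1)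
        ⟨by simp, Ne.symm hne, hne2⟩
      exact this ((hp2 b).symm.trans hab.symm)
    · have := hproper (ℓsucc, b, (p b).1) (ℓsucc, a, (p a).1)
        ⟨by simp, Ne.symm hne, h⟩
      exact this hab.symm
  -- for i' ≠ i, d i' avoids the colors of row i of gadget ℓ
  have havoid : ∀ i' : Fin k, i' ≠ i → ∀ j : Fin k, d i' ≠ c (ℓ, i, j) := by
    intro i' hii j hcontra
    rcases eq_or_ne j (p i').1 with h | h
    · have hne2 : j ≠ (p i').2 := by rw [h]; exact hp1 i'
      have := hproper (ℓ, i, j) (ℓsucc, i', (p i').2)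
        ⟨habs, Ne.symm hii, hne2⟩
      exact this (hcontra.symm.trans (hp2 i'))
    · have := hproper (ℓ, i, j) (ℓsucc, i', (p i').1)
        ⟨habs, Ne.symm hii, h⟩
      exact this hcontra.symm
  -- cardinality argument
  set S : Finset (Fin (2 * k - 2)) :=
    Finset.image (fun j : Fin k => c (ℓ, i, j)) Finset.univ with hS
  set D : Finset (Fin (2 * k - 2)) :=
    Finset.image d (Finset.univ.erase i) with hD
  have hScard : S.card = k := by
    rw [hS, Finset.card_image_of_injective _ hi, Finset.card_univ, Fintype.card_fin]
  have hDcard : D.card = k - 1 := by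
    rw [hD, Finset.card_image_of_injective _ hdinj, Finset.card_erase_of_mem
      (Finset.mem_univ i), Finset.card_univ, Fintype.card_fin]
  have hdisj : Disjoint D S := by
    rw [Finset.disjoint_left]
    intro x hxD hxS
    rw [hD, Finset.mem_image] at hxD
    obtain ⟨i', hi', hdi'⟩ := hxD
    rw [hS, Finset.mem_image] at hxS
    obtain ⟨j, _, hj⟩ := hxS
    exact havoid i' (Finset.ne_of_mem_erase hi') j (by rw [hdi', hj])
  have hunion : (D ∪ S).card = (k - 1) + k := by
    rw [Finset.card_union_of_disjoint hdisj, hDcard, hScard]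
  have hle : (D ∪ S).card ≤ 2 * k - 2 := by
    have := Finset.card_le_univ (D ∪ S)
    simpa using this
  omega
end

section
/- Consider any proper coloring of a toroidal grid with the modular 4-cell structure: for two directed cycles C₁ and C₂ obtained by orienting two distinct rows of a toroidal grid in opposite directions, under any proper 3-coloring, b(C₁) + b(C₂) = 0. -/
/-- Adjacency in the `(a × b)` toroidal grid (wraparound in both coordinates). -/
def TorusAdj {a b : ℕ} [NeZero a] [NeZero b] (u v : Fin a × Fin b) : Prop :=
  (u.1 = v.1 ∧ (v.2 = u.2 + 1 ∨ u.2 = v.2 + 1)) ∨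
  (u.2 = v.2 ∧ (v.1 = u.1 + 1 ∨ u.1 = v.1 + 1))

private def av (x y : ℤ) : ℤ := if x ≠ 3 ∧ y ≠ 3 then x - y else 0

private lemma aval_eq_av {V : Type} (c : V → ℤ) (u v : V) : aval c u v = av (c u) (c v) := rfl

private lemma av_antisymm (x y : ℤ) : av x y = - av y x := by
  unfold av
  by_cases hx : x = 3 <;> by_cases hy : y = 3 <;> simp [hx, hy] <;> ring

private lemma square (x y z w : ℤ)
    (hx : x = 1 ∨ x = 2 ∨ x = 3) (hy : y = 1 ∨ y = 2 ∨ y = 3)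
    (hz : z = 1 ∨ z = 2 ∨ z = 3) (hw : w = 1 ∨ w = 2 ∨ w = 3)
    (hxy : x ≠ y) (hyz : y ≠ z) (hzw : z ≠ w) (hwx : w ≠ x) :
    av x y + av y z + av z w + av w x = 0 := by
  rcases hx with rfl | rfl | rfl <;> rcases hy with rfl | rfl | rfl <;>
    rcases hz with rfl | rfl | rfl <;> rcases hw with rfl | rfl | rfl <;>
    simp_all [av]

theorem stmt13 (a b : ℕ) [NeZero a] [NeZero b]
    (c : Fin a × Fin b → ℤ)
    (hc : ∀ v, c v = 1 ∨ c v = 2 ∨ c v = 3)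
    (hproper : ∀ u v, TorusAdj u v → c u ≠ c v)
    (r₁ r₂ : Fin a) (hr : r₁ ≠ r₂) :
    (∑ j : Fin b, aval c (r₁, j) (r₁, j + 1)) +
      (∑ j : Fin b, aval c (r₂, j + 1) (r₂, j)) = 0 := by
  set S : Fin a → ℤ := fun r => ∑ j : Fin b, aval c (r, j) (r, j + 1) with hS
  -- step: S r = S (r+1)
  have step : ∀ r : Fin a, S r = S (r + 1) := by
    intro r
    have key : ∀ j : Fin b,
        aval c (r, j) (r, j + 1) - aval c (r + 1, j) (r + 1, j + 1)
          = aval c (r + 1, j + 1) (r, j + 1) - aval c (r + 1, j) (r, j) := by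
      intro j
      have h1 : c (r, j) ≠ c (r, j + 1) := hproper _ _ (Or.inl ⟨rfl, Or.inl rfl⟩)
      have h2 : c (r, j + 1) ≠ c (r + 1, j + 1) := hproper _ _ (Or.inr ⟨rfl, Or.inl rfl⟩)
      have h3 : c (r + 1, j + 1) ≠ c (r + 1, j) := hproper _ _ (Or.inl ⟨rfl, Or.inr rfl⟩)
      have h4 : c (r + 1, j) ≠ c (r, j) := hproper _ _ (Or.inr ⟨rfl, Or.inr rfl⟩)
      have hsq := square (c (r, j)) (c (r, j + 1)) (c (r + 1, j + 1)) (c (r + 1, j))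
        (hc _) (hc _) (hc _) (hc _) h1 h2 h3 h4
      simp only [aval_eq_av]
      have e1 : av (c (r + 1, j + 1)) (c (r + 1, j)) = - av (c (r + 1, j)) (c (r + 1, j + 1)) :=
        av_antisymm _ _
      have e2 : av (c (r, j + 1)) (c (r + 1, j + 1)) = - av (c (r + 1, j + 1)) (c (r, j + 1)) :=
        av_antisymm _ _
      linarith [hsq]
    have hsum : (∑ j : Fin b, (aval c (r, j) (r, j + 1) - aval c (r + 1, j) (r + 1, j + 1)))
        = ∑ j : Fin b, (aval c (r + 1, j + 1) (r, j + 1) - aval c (r + 1, j) (r, j)) :=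
      Finset.sum_congr rfl (fun j _ => key j)
    have htel : (∑ j : Fin b, (aval c (r + 1, j + 1) (r, j + 1) - aval c (r + 1, j) (r, j))) = 0 := by
      rw [Finset.sum_sub_distrib]
      have : (∑ j : Fin b, aval c (r + 1, j + 1) (r, j + 1))
          = ∑ j : Fin b, aval c (r + 1, j) (r, j) :=
        Fintype.sum_equiv (Equiv.addRight (1 : Fin b)) _ _ (fun j => rfl)
      rw [this]; ring
    have : S r - S (r + 1) = 0 := by
      rw [hS]; simp only [← Finset.sum_sub_distrib]
      rw [hsum, htel]
    linarith
  -- constancy: S r = S (r + n) for all n : ℕ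
  open Fin.NatCast Fin.CommRing in
  have const : ∀ (n : ℕ) (r : Fin a), S r = S (r + (n : Fin a)) := by
    intro n
    induction n with
    | zero => intro r; simp
    | succ k ih =>
        intro r
        have := ih (r + 1)
        rw [step r, this]
        congr 1
        push_cast
        ring
  have hconst : S r₁ = S r₂ := by
    have := const (r₂ - r₁).val r₁
    rwa [Fin.cast_val_eq_self, add_sub_cancel] at this
  -- reversed sum is the negative
  have hrev : (∑ j : Fin b, aval c (r₂, j + 1) (r₂, j)) = - S r₂ := by
    rw [hS, ← Finset.sum_neg_distrib]
    exact Finset.sum_congr rfl (fun j _ => by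
      simp only [aval_eq_av]; rw [av_antisymm])
  rw [hrev, ← hconst]
  ring
end

section
/- If the number b of columns of a toroidal grid is odd, then for any proper 3-coloring, the b-value of each directed row cycle is an odd integer; consequently two row cycles oriented in the same direction have b-values of the same parity (odd) and cannot both be zero. -/
theorem stmt14 (a b : ℕ) [NeZero a] [NeZero b] (hb : Odd b)
    (c : Fin a × Fin b → ℤ)
    (hc : ∀ v, c v = 1 ∨ c v = 2 ∨ c v = 3)
    (hproper : ∀ u v, TorusAdj u v → c u ≠ c v) :
    (∀ r : Fin a, Odd (∑ j : Fin b, aval c (r, j) (r, j + 1))) ∧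
    (∀ r₁ r₂ : Fin a,
      ¬ ((∑ j : Fin b, aval c (r₁, j) (r₁, j + 1)) = 0 ∧
         (∑ j : Fin b, aval c (r₂, j) (r₂, j + 1)) = 0)) := by
  have key : ∀ r : Fin a, Odd (∑ j : Fin b, aval c (r, j) (r, j + 1)) := by
    intro r
    set fj : Fin b → ZMod 2 := fun j => if c (r, j) = 3 then 1 else 0 with hfj
    have hedge : ∀ j : Fin b, ((aval c (r, j) (r, j + 1) : ℤ) : ZMod 2)
        = 1 - fj j - fj (j + 1) := by
      intro j
      have hadj : TorusAdj (r, j) (r, j + 1) := Or.inl ⟨rfl, Or.inl rfl⟩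
      have hne := hproper _ _ hadj
      unfold aval
      rcases hc (r, j) with h1 | h1 | h1 <;> rcases hc (r, j + 1) with h2 | h2 | h2 <;>
        simp [hfj, h1, h2] at hne ⊢ <;> decide
    have h2 : ((∑ j : Fin b, aval c (r, j) (r, j + 1) : ℤ) : ZMod 2) = 1 := by
      push_cast
      rw [Finset.sum_congr rfl (fun j _ => hedge j)]
      have hre : (∑ j : Fin b, fj (j + 1)) = ∑ j : Fin b, fj j :=
        Fintype.sum_equiv (Equiv.addRight (1 : Fin b)) _ _ (fun j => rfl)
      have hdouble : ∀ x : ZMod 2, x + x = 0 := by decide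
      have hbodd : ((b : ℕ) : ZMod 2) = 1 := by
        obtain ⟨k, hk⟩ := hb
        subst hk; push_cast
        have : ((2 : ℕ) : ZMod 2) = 0 := by decide
        push_cast at this ⊢
        rw [mul_comm]
        simp [this]
      rw [Finset.sum_sub_distrib, Finset.sum_sub_distrib, hre, Finset.sum_const,
        Finset.card_univ, Fintype.card_fin]
      rw [sub_sub, hdouble, sub_zero]
      simpa using hbodd
    rw [← Int.not_even_iff_odd]
    intro ⟨k, hk⟩
    rw [hk] at h2
    push_cast at h2
    rw [CharTwo.add_self_eq_zero] at h2
    exact zero_ne_one h2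
  refine ⟨key, fun r₁ r₂ h => ?_⟩
  have := key r₁
  rw [h.1] at this
  simp [Int.odd_iff] at this
end

section
/- Let k ≥ 2 and suppose in G_{k+1} (obtained from G_k by vertex duplication) there is a proper coloring c with k + 2 colors. Define a coloring c' of G_k by c'(u) = c(u) if c(u) ≠ k+2, and c'(u) = c(u*) if c(u) = k+2, where u* is the duplicate of u. Then c' is a proper (k+1)-coloring of G_k. -/
def dup {V : Type} (G : SimpleGraph V) : SimpleGraph (V ⊕ V) where
  Adj x y :=
    match x, y with
    | .inl u, .inl v => G.Adj u v
    | .inl u, .inr v => u = v ∨ G.Adj u v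
    | .inr u, .inl v => u = v ∨ G.Adj u v
    | .inr _, .inr _ => False
  symm := by
    constructor
    rintro (u | u) (v | v) h
    · exact G.adj_symm h
    · exact h.imp Eq.symm (fun ha => G.adj_symm ha)
    · exact h.imp Eq.symm (fun ha => G.adj_symm ha)
    · exact h
  loopless := by
    constructor
    rintro (u | u) h
    · exact G.irrefl h
    · exact h

theorem stmt18 {V : Type} (G : SimpleGraph V) (k : ℕ) (hk : 2 ≤ k)
    (c : V ⊕ V → Fin (k + 2))
    (hc : ∀ x y, (dup G).Adj x y → c x ≠ c y) :
    (∀ u v, G.Adj u v →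
        (if c (Sum.inl u) = Fin.last (k + 1) then c (Sum.inr u) else c (Sum.inl u)) ≠
        (if c (Sum.inl v) = Fin.last (k + 1) then c (Sum.inr v) else c (Sum.inl v))) ∧
    (∀ u : V,
        (if c (Sum.inl u) = Fin.last (k + 1) then c (Sum.inr u) else c (Sum.inl u)) ≠
          Fin.last (k + 1)) := by
  constructor
  · intro u v huv
    by_cases hu : c (Sum.inl u) = Fin.last (k + 1) <;>
      by_cases hv : c (Sum.inl v) = Fin.last (k + 1) <;>
      simp only [hu, hv, if_pos, if_neg, if_true, if_false]
    · exact absurd (hv ▸ hu) (hc _ _ (show (dup G).Adj (Sum.inl u) (Sum.inl v) from huv))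
    · exact fun h => hc (Sum.inr u) (Sum.inl v) (Or.inr huv) h
    · exact fun h => hc (Sum.inl u) (Sum.inr v) (Or.inr huv) h
    · exact hc (Sum.inl u) (Sum.inl v) huv
  · intro u
    by_cases hu : c (Sum.inl u) = Fin.last (k + 1) <;>
      simp only [hu, if_true, if_false, if_pos, if_neg]
    · exact fun h => hc (Sum.inl u) (Sum.inr u) (Or.inl rfl) (hu.trans h.symm)
    · exact hu
end
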